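/- arXiv:2002.00204 — 9 statements merged into one kernel-verified Lean document; each statement's English description precedes it below -/
import Mathlib

section
/- Let I = [r..i] and I' = [r'..i'] be integer intervals with |I| ≥ 2, |I'| ≥ 2, |I| ≠ |I'|, and i ≠ i'. Set Ĩ = I \ {i} and Ĩ' = I' \ {i'}. Then φ := (β(I,I') − α(I,I')) − (β(I,Ĩ') − α(I,Ĩ')) − (β(Ĩ,I') − α(Ĩ,I')) + (β(Ĩ,Ĩ') − α(Ĩ,Ĩ')) = 0. -/
/-!
Counting the points of an interval below or above a threshold shows
`β(P,P') = max 0 (min (min (r' - r) (i' - i)) (min |P| |P'|))` for `P = [r..i]`, `P' = [r'..i']`,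
and `α(P,P') = β(P',P)`, so `φ` is antisymmetric in `I, I'` and we may assume `|I| < |I'|`.
Then every pair occurring in `φ` has its first interval no longer than its second, the
`r' - r` contributions cancel, and with `c = i - i'` what is left is
the Iverson bracket difference `[0 ≤ c < |I|] - [0 < c < |I|]`, which vanishes because `c ≠ 0`.
-/

/-- `α(P,P') = min(|{p' ∈ P' : p' < min P}|, |{p ∈ P : p > max P'}|)` for
`P = [r..i]`, `P' = [r'..i']`. -/
noncomputable def alphaPP (r i r' i' : ℤ) : ℕ :=
  min ((Finset.Icc r' i').filter (fun p => p < r)).card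
      ((Finset.Icc r i).filter (fun p => i' < p)).card

/-- `β(P,P') = min(|{p' ∈ P' : p' > max P}|, |{p ∈ P : p < min P'}|)`. -/
noncomputable def betaPP (r i r' i' : ℤ) : ℕ :=
  min ((Finset.Icc r' i').filter (fun p => i < p)).card
      ((Finset.Icc r i).filter (fun p => p < r')).card

/-- The quantity `φ` for `I = [r..i]`, `I' = [r'..i']`, `Ĩ = I \ {i} = [r..i-1]`,
`Ĩ' = I' \ {i'} = [r'..i'-1]`. -/
noncomputable def phiII (r i r' i' : ℤ) : ℤ :=
  ((betaPP r i r' i' : ℤ) - alphaPP r i r' i')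
    - ((betaPP r i r' (i' - 1) : ℤ) - alphaPP r i r' (i' - 1))
    - ((betaPP r (i - 1) r' i' : ℤ) - alphaPP r (i - 1) r' i')
    + ((betaPP r (i - 1) r' (i' - 1) : ℤ) - alphaPP r (i - 1) r' (i' - 1))

lemma card_filter_lt_Icc (a b c : ℤ) :
    (((Finset.Icc a b).filter (· < c)).card : ℤ) = max 0 (min (b - a + 1) (c - a)) := by
  have h : (Finset.Icc a b).filter (· < c) = Finset.Icc a (min b (c - 1)) := by
    ext x; simp only [Finset.mem_filter, Finset.mem_Icc]; omega
  rw [h, Int.card_Icc]; omega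

lemma card_filter_gt_Icc (a b c : ℤ) :
    (((Finset.Icc a b).filter (c < ·)).card : ℤ) = max 0 (min (b - a + 1) (b - c)) := by
  have h : (Finset.Icc a b).filter (c < ·) = Finset.Icc (max a (c + 1)) b := by
    ext x; simp only [Finset.mem_filter, Finset.mem_Icc]; omega
  rw [h, Int.card_Icc]; omega

lemma betaPP_eq (r i r' i' : ℤ) :
    (betaPP r i r' i' : ℤ) =
      max 0 (min (min (r' - r) (i' - i)) (min (i - r + 1) (i' - r' + 1))) := by
  rw [betaPP, Nat.cast_min, card_filter_gt_Icc, card_filter_lt_Icc]; omega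

lemma alphaPP_eq_betaPP (r i r' i' : ℤ) : alphaPP r i r' i' = betaPP r' i' r i :=
  min_comm _ _

lemma phiII_swap (r i r' i' : ℤ) : phiII r' i' r i = -phiII r i r' i' := by
  simp only [phiII, alphaPP_eq_betaPP]; ring

lemma betaPP_sub_alphaPP_of_le {r i r' i' : ℤ} (h : i - r ≤ i' - r') :
    (betaPP r i r' i' : ℤ) - alphaPP r i r' i' =
      max 0 (min (r' - r) (i - r + 1)) - max 0 (min (i - i') (i - r + 1)) := by
  rw [alphaPP_eq_betaPP, betaPP_eq, betaPP_eq]; omega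

lemma phiII_eq_zero_of_card_lt {r i r' i' : ℤ}
    (hcard : (Finset.Icc r i).card < (Finset.Icc r' i').card) (hii : i ≠ i') :
    phiII r i r' i' = 0 := by
  rw [Int.card_Icc, Int.card_Icc] at hcard
  have hlen : i - r < i' - r' := by omega
  rw [phiII, betaPP_sub_alphaPP_of_le hlen.le, betaPP_sub_alphaPP_of_le (by omega),
    betaPP_sub_alphaPP_of_le (by omega), betaPP_sub_alphaPP_of_le (by omega)]
  omega

theorem stmt3_general (r i r' i' : ℤ)
    (hcard : (Finset.Icc r i).card ≠ (Finset.Icc r' i').card)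
    (hii : i ≠ i') :
    phiII r i r' i' = 0 := by
  rcases hcard.lt_or_gt with hlt | hgt
  · exact phiII_eq_zero_of_card_lt hlt hii
  · rw [← neg_eq_zero, ← phiII_swap]
    exact phiII_eq_zero_of_card_lt hgt hii.symm

/-- if `|I|, |I'| ≥ 2`, `|I| ≠ |I'|` and `i ≠ i'`, then `φ = 0`. -/
theorem stmt3 (r i r' i' : ℤ) (hI : r ≤ i - 1) (hI' : r' ≤ i' - 1)
    (hcard : (Finset.Icc r i).card ≠ (Finset.Icc r' i').card)
    (hii : i ≠ i') :
    phiII r i r' i' = 0 :=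
  stmt3_general r i r' i' hcard hii
end

section
/- Let I = [r..i] and I' = [r'..i'] be integer intervals with |I| = |I'| ≥ 2 and i > i'. Set Ĩ = I \ {i} and Ĩ' = I' \ {i'}. Then φ := (β(I,I') − α(I,I')) − (β(I,Ĩ') − α(I,Ĩ')) − (β(Ĩ,I') − α(Ĩ,I')) + (β(Ĩ,Ĩ') − α(Ĩ,Ĩ')) = −1. -/
lemma betaPP_zero (r i r' i' : ℤ) (h : i' ≤ i) : betaPP r i r' i' = 0 := by
  unfold betaPP
  have he : (Finset.Icc r' i').filter (fun p => i < p) = ∅ := by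
    ext x; simp [Finset.mem_Icc]; omega
  simp [he]

lemma card_filter_lt (a b c : ℤ) :
    ((Finset.Icc a b).filter (fun p => p < c)).card = (min b (c - 1) + 1 - a).toNat := by
  have h : (Finset.Icc a b).filter (fun p => p < c) = Finset.Icc a (min b (c - 1)) := by
    ext x; simp [Finset.mem_filter, Finset.mem_Icc]; omega
  rw [h, Int.card_Icc]

lemma card_filter_gt (a b c : ℤ) :
    ((Finset.Icc a b).filter (fun p => c < p)).card = (b + 1 - max a (c + 1)).toNat := by
  have h : (Finset.Icc a b).filter (fun p => c < p) = Finset.Icc (max a (c + 1)) b := by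
    ext x; simp [Finset.mem_filter, Finset.mem_Icc]; omega
  rw [h, Int.card_Icc]

set_option maxHeartbeats 2000000 in
/-- if `|I| = |I'| ≥ 2` and `i > i'`, then `φ = -1`. -/
theorem stmt4 (r i r' i' : ℤ) (hI : r ≤ i - 1) (hI' : r' ≤ i' - 1)
    (hcard : (Finset.Icc r i).card = (Finset.Icc r' i').card)
    (hii : i' < i) :
    phiII r i r' i' = -1 := by
  rw [Int.card_Icc, Int.card_Icc] at hcard
  rw [phiII, betaPP_zero _ _ _ _ (by omega), betaPP_zero _ _ _ _ (by omega),
    betaPP_zero _ _ _ _ (by omega), betaPP_zero _ _ _ _ (by omega)]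
  unfold alphaPP
  simp only [card_filter_lt, card_filter_gt]
  push_cast
  omega
end

section
/- Let I = [r..i] and I' = [r'..i'] be integer intervals with |I| = |I'| ≥ 2 and i = i'. Set Ĩ = I \ {i} and Ĩ' = I' \ {i'}. Then φ := (β(I,I') − α(I,I')) − (β(I,Ĩ') − α(I,Ĩ')) − (β(Ĩ,I') − α(Ĩ,I')) + (β(Ĩ,Ĩ') − α(Ĩ,Ĩ')) = 0. -/
/-- if `|I| = |I'| ≥ 2` and `i = i'`, then `φ = 0`. -/
theorem stmt5 (r i r' i' : ℤ) (hI : r ≤ i - 1) (hI' : r' ≤ i' - 1)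
    (hcard : (Finset.Icc r i).card = (Finset.Icc r' i').card)
    (hii : i = i') :
    phiII r i r' i' = 0 := by
  subst hii
  have hrr : r = r' := by
    rw [Int.card_Icc, Int.card_Icc] at hcard
    omega
  subst hrr
  have h1 : ∀ b : ℤ, (Finset.Icc r b).filter (fun p => p < r) = ∅ := by
    intro b
    apply Finset.filter_false_of_mem
    intro x hx
    simp only [Finset.mem_Icc] at hx
    omega
  have h2 : ∀ c : ℤ, i ≤ c → (Finset.Icc r i).filter (fun p => c < p) = ∅ := by
    intro c hc
    apply Finset.filter_false_of_mem
    intro x hx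
    simp only [Finset.mem_Icc] at hx
    omega
  have h3 : ∀ c : ℤ, i - 1 ≤ c → (Finset.Icc r (i-1)).filter (fun p => c < p) = ∅ := by
    intro c hc
    apply Finset.filter_false_of_mem
    intro x hx
    simp only [Finset.mem_Icc] at hx
    omega
  unfold phiII alphaPP betaPP
  simp [h1, h2 i le_rfl, h3 (i-1) le_rfl, h3 i (by omega)]
end

section
/- Let I = [r..i] and I' = [r'..i'] be integer intervals with |I| > |I'| ≥ 2 and i = i'. Set Ĩ = I \ {i} and Ĩ' = I' \ {i'}. Then φ := (β(I,I') − α(I,I')) − (β(I,Ĩ') − α(I,Ĩ')) − (β(Ĩ,I') − α(Ĩ,I')) + (β(Ĩ,Ĩ') − α(Ĩ,Ĩ')) = −1. -/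
set_option maxHeartbeats 1000000

lemma filt_lt (a b c : ℤ) :
    ((Finset.Icc a b).filter (fun p => p < c)).card = (min b (c-1) + 1 - a).toNat := by
  rw [show (Finset.Icc a b).filter (fun p => p < c) = Finset.Icc a (min b (c-1)) by
    ext x; simp [Finset.mem_Icc]; omega]
  exact Int.card_Icc _ _

lemma filt_gt (a b c : ℤ) :
    ((Finset.Icc a b).filter (fun p => c < p)).card = (b + 1 - max a (c+1)).toNat := by
  rw [show (Finset.Icc a b).filter (fun p => c < p) = Finset.Icc (max a (c+1)) b by
    ext x; simp [Finset.mem_Icc]; omega]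
  exact Int.card_Icc _ _

/-- if `|I| > |I'| ≥ 2` and `i = i'`, then `φ = -1`. -/
theorem stmt6 (r i r' i' : ℤ) (hI : r ≤ i - 1) (hI' : r' ≤ i' - 1)
    (hcard : (Finset.Icc r' i').card < (Finset.Icc r i).card)
    (hii : i = i') :
    phiII r i r' i' = -1 := by
  subst hii
  rw [Int.card_Icc, Int.card_Icc] at hcard
  simp only [phiII, alphaPP, betaPP, filt_lt, filt_gt]
  omega
end

section
/- Let m, n ≥ 1 and let f, g : E^{m,n} → A \ {0} be functions into a (noncommutative) ring A with f(∅|∅) = g(∅|∅) = 1, such that no value of f is a zero divisor in A, both f and g satisfy all Plücker-type relations f(Aj|B)f(Aik|Bℓ) = f(Aij|Bℓ)f(Ak|B) + f(Ajk|Bℓ)f(Ai|B), all co-Plücker-type relations f(A|Bj)f(Aℓ|Bik) = f(Aℓ|Bij)f(A|Bk) + f(Aℓ|Bjk)f(A|Bi), and all Dodgson-type relations f(Ai|Bj)f(Ak|Bℓ) = f(Aik|Bjℓ)f(A|B) + q·f(Ai|Bℓ)f(Ak|Bj) (for the appropriate index configurations), and f and g coincide on all pressed double-interval corteges. Then f =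 g on all of E^{m,n}. -/
open Finset

/-- `(I|J)` is a cortege of `E^{m,n}`: `I ⊆ [m]`, `J ⊆ [n]`, `|I| = |J|`. -/
def Cortege (m n : ℕ) (I J : Finset ℕ) : Prop :=
  I ⊆ Finset.Icc 1 m ∧ J ⊆ Finset.Icc 1 n ∧ I.card = J.card

/-- `(I|J)` is a pressed double-interval cortege: both `I` and `J` are
integer intervals and at least one of them is an initial interval. -/
def PressedInt (I J : Finset ℕ) : Prop :=
  (∃ a b, I = Finset.Icc a b) ∧ (∃ c d, J = Finset.Icc c d) ∧
  (I = Finset.Icc 1 I.card ∨ J = Finset.Icc 1 J.card)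

/-- `h` satisfies all Plücker-type relations with triples (rows version):
for `A ⊂ [m]`, `B ⊂ [n]`, `i < j < k` in `[m] \ A`, `ℓ ∈ [n] \ B`,
`|A| + 1 = |B|`:
`h(Aj|B) h(Aik|Bℓ) = h(Aij|Bℓ) h(Ak|B) + h(Ajk|Bℓ) h(Ai|B)`. -/
def PlueckerRel {R : Type*} [Ring R] (m n : ℕ)
    (h : Finset ℕ → Finset ℕ → R) : Prop :=
  ∀ (A B : Finset ℕ) (i j k l : ℕ),
    A ⊆ Finset.Icc 1 m → B ⊆ Finset.Icc 1 n →
    i ∈ Finset.Icc 1 m → j ∈ Finset.Icc 1 m → k ∈ Finset.Icc 1 m →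
    l ∈ Finset.Icc 1 n →
    i ∉ A → j ∉ A → k ∉ A → l ∉ B → i < j → j < k → A.card + 1 = B.card →
    h (insert j A) B * h (insert i (insert k A)) (insert l B) =
      h (insert i (insert j A)) (insert l B) * h (insert k A) B +
      h (insert j (insert k A)) (insert l B) * h (insert i A) B

/-- `h` satisfies all co-Plücker-type relations (columns version):
for `A ⊂ [m]`, `B ⊂ [n]`, `ℓ ∈ [m] \ A`, `i < j < k` in `[n] \ B`,
`|A| = |B| + 1`:
`h(A|Bj) h(Aℓ|Bik) = h(Aℓ|Bij) h(A|Bk) + h(Aℓ|Bjk) h(A|Bi)`. -/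
def CoPlueckerRel {R : Type*} [Ring R] (m n : ℕ)
    (h : Finset ℕ → Finset ℕ → R) : Prop :=
  ∀ (A B : Finset ℕ) (l i j k : ℕ),
    A ⊆ Finset.Icc 1 m → B ⊆ Finset.Icc 1 n →
    l ∈ Finset.Icc 1 m →
    i ∈ Finset.Icc 1 n → j ∈ Finset.Icc 1 n → k ∈ Finset.Icc 1 n →
    l ∉ A → i ∉ B → j ∉ B → k ∉ B → i < j → j < k → A.card = B.card + 1 →
    h A (insert j B) * h (insert l A) (insert i (insert k B)) =
      h (insert l A) (insert i (insert j B)) * h A (insert k B) +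
      h (insert l A) (insert j (insert k B)) * h A (insert i B)

/-- `h` satisfies all Dodgson-type relations: for `i ≤ k` in `[m]`,
`j ≤ ℓ` in `[n]` with `k - i = ℓ - j`, and `A = [i+1..k-1]`, `B = [j+1..ℓ-1]`:
`h(Ai|Bj) h(Ak|Bℓ) = h(Aik|Bjℓ) h(A|B) + q·h(Ai|Bℓ) h(Ak|Bj)`. -/
def DodgsonRel {R : Type*} [Ring R] (m n : ℕ) (q : R)
    (h : Finset ℕ → Finset ℕ → R) : Prop :=
  ∀ i k j l : ℕ, 1 ≤ i → k ≤ m → 1 ≤ j → l ≤ n → i ≤ k → j ≤ l →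
    k - i = l - j →
    h (insert i (Finset.Icc (i+1) (k-1))) (insert j (Finset.Icc (j+1) (l-1))) *
      h (insert k (Finset.Icc (i+1) (k-1))) (insert l (Finset.Icc (j+1) (l-1))) =
    h (insert i (insert k (Finset.Icc (i+1) (k-1))))
        (insert j (insert l (Finset.Icc (j+1) (l-1)))) *
      h (Finset.Icc (i+1) (k-1)) (Finset.Icc (j+1) (l-1)) +
    q * (h (insert i (Finset.Icc (i+1) (k-1))) (insert l (Finset.Icc (j+1) (l-1))) *
      h (insert k (Finset.Icc (i+1) (k-1))) (insert j (Finset.Icc (j+1) (l-1))))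

/-
Write `width I = max I - min I`. If `I` has a gap `j`, i.e. `i = min I < j < k = max I` and
`j ∉ I`, the Plücker relation for `A = I \ {i, k}` and `B = J \ {l}` expresses
`f(Aj|B) f(I|J)` through values at corteges that are smaller, or of the same size with a
narrower row set; as `f(Aj|B)` is regular, these values determine `f(I|J)`. The co-Plücker
relation does the same for a gap in `J`, so by induction on `|J| + width I + width J` the
values on double intervals determine everything. On a double interval the Dodgson relation
determines `f(Icc (i+1) (b+1) | Icc (j+1) (d+1))` from double intervals with smaller `b + c`
(right end of the rows plus left end of the columns), down to the pressed ones.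
-/

section Width

variable {I : Finset ℕ}

def width (I : Finset ℕ) : ℕ := if h : I.Nonempty then I.max' h - I.min' h else 0

lemma width_eq (h : I.Nonempty) : width I = I.max' h - I.min' h := dif_pos h

lemma width_le_of_subset_Icc {S : Finset ℕ} {a b : ℕ} (h : S ⊆ Icc a b) :
    width S ≤ b - a := by
  unfold width
  split_ifs with hS
  · have ha : a ≤ S.min' hS := le_min' _ _ _ fun y hy => (mem_Icc.mp (h hy)).1
    have hb : S.max' hS ≤ b := max'_le _ _ _ fun y hy => (mem_Icc.mp (h hy)).2
    omega
  · exact Nat.zero_le _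

lemma subset_Icc_min'_max' (h : I.Nonempty) : I ⊆ Icc (I.min' h) (I.max' h) :=
  fun _ hx => mem_Icc.mpr ⟨min'_le _ _ hx, le_max' _ _ hx⟩

lemma width_mono {I' : Finset ℕ} (hI : I ⊆ I') : width I ≤ width I' := by
  rcases I'.eq_empty_or_nonempty with rfl | h
  · rw [subset_empty.mp hI]
  · rw [width_eq h]
    exact width_le_of_subset_Icc (hI.trans (subset_Icc_min'_max' h))

lemma width_eq_of_subset_Icc {i k : ℕ} (hi : i ∈ I) (hk : k ∈ I) (h : I ⊆ Icc i k) :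
    width I = k - i := by
  have hI : I.Nonempty := ⟨i, hi⟩
  have hmin : I.min' hI = i :=
    le_antisymm (min'_le _ _ hi) (le_min' _ _ _ fun y hy => (mem_Icc.mp (h hy)).1)
  have hmax : I.max' hI = k :=
    le_antisymm (max'_le _ _ _ fun y hy => (mem_Icc.mp (h hy)).2) (le_max' _ _ hk)
  rw [width_eq hI, hmin, hmax]

lemma exists_eq_Icc_or_exists_gap (I : Finset ℕ) :
    (∃ a b, I = Icc a b) ∨ ∃ i ∈ I, ∃ k ∈ I, I ⊆ Icc i k ∧ ∃ j ∉ I, i < j ∧ j < k := by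
  rcases I.eq_empty_or_nonempty with rfl | h
  · exact .inl ⟨1, 0, rfl⟩
  by_cases hsub : Icc (I.min' h) (I.max' h) ⊆ I
  · exact .inl ⟨_, _, (subset_Icc_min'_max' h).antisymm hsub⟩
  obtain ⟨j, hj, hjI⟩ := not_subset.mp hsub
  rw [mem_Icc] at hj
  refine .inr ⟨_, min'_mem I h, _, max'_mem I h, subset_Icc_min'_max' h, j, hjI,
    lt_of_le_of_ne hj.1 ?_, lt_of_le_of_ne hj.2 ?_⟩
  · rintro rfl; exact hjI (min'_mem _ _)
  · rintro rfl; exact hjI (max'_mem _ _)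

end Width

section Cortege

variable {m n : ℕ} {I J : Finset ℕ}

lemma Cortege.Icc_bounds {a b c d : ℕ} (h : Cortege m n (Icc a b) (Icc c d)) (hab : a ≤ b) :
    1 ≤ a ∧ b ≤ m ∧ 1 ≤ c ∧ d ≤ n ∧ b + 1 - a = d + 1 - c := by
  have hlen : b + 1 - a = d + 1 - c := by simpa only [Nat.card_Icc] using h.2.2
  have ha := mem_Icc.mp (h.1 (left_mem_Icc.mpr hab))
  have hb := mem_Icc.mp (h.1 (right_mem_Icc.mpr hab))
  have hc := mem_Icc.mp (h.2.1 (left_mem_Icc.mpr (by omega : c ≤ d)))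
  have hd := mem_Icc.mp (h.2.1 (right_mem_Icc.mpr (by omega : c ≤ d)))
  omega

lemma cortege_Icc {a b c d : ℕ} (ha : 1 ≤ a) (hb : b ≤ m) (hc : 1 ≤ c) (hd : d ≤ n)
    (h : b + 1 - a = d + 1 - c) : Cortege m n (Icc a b) (Icc c d) :=
  ⟨Icc_subset_Icc ha hb, Icc_subset_Icc hc hd, by simpa only [Nat.card_Icc] using h⟩

lemma Cortege.swap (h : Cortege m n I J) : Cortege n m J I := ⟨h.2.1, h.1, h.2.2.symm⟩

lemma Cortege.erase {i l : ℕ} (h : Cortege m n I J) (hi : i ∈ I) (hl : l ∈ J) :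
    Cortege m n (I.erase i) (J.erase l) :=
  ⟨(erase_subset _ _).trans h.1, (erase_subset _ _).trans h.2.1, by
    rw [card_erase_of_mem hi, card_erase_of_mem hl, h.2.2]⟩

lemma Cortege.insert_erase {i j : ℕ} (h : Cortege m n I J) (hi : i ∈ I) (hj : j ∉ I)
    (hjm : j ∈ Icc 1 m) : Cortege m n (insert j (I.erase i)) J :=
  ⟨insert_subset hjm ((erase_subset _ _).trans h.1), h.2.1, by
    rw [card_insert_of_notMem fun h' => hj (mem_of_mem_erase h'), card_erase_add_one hi, h.2.2]⟩

end Cortege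

section Relations

variable {R : Type*} [Ring R] {m n : ℕ} {h : Finset ℕ → Finset ℕ → R}

lemma CoPlueckerRel.plueckerRel_swap (hC : CoPlueckerRel m n h) :
    PlueckerRel n m (Function.swap h) :=
  fun A B i j k l hA hB hi hj hk hl hiA hjA hkA hlB hij hjk hcard =>
    hC B A l i j k hB hA hl hi hj hk hlB hiA hjA hkA hij hjk hcard.symm

lemma PlueckerRel.relation_at_gap (hP : PlueckerRel m n h) {I J : Finset ℕ}
    (hC : Cortege m n I J) {i j k l : ℕ} (hi : i ∈ I) (hk : k ∈ I) (hj : j ∉ I)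
    (hij : i < j) (hjk : j < k) (hl : l ∈ J) :
    h (insert j ((I.erase i).erase k)) (J.erase l) * h I J =
      h (insert j (I.erase k)) J * h (I.erase i) (J.erase l) +
      h (insert j (I.erase i)) J * h (I.erase k) (J.erase l) := by
  have hkI : k ∈ I.erase i := mem_erase.mpr ⟨(hij.trans hjk).ne', hk⟩
  have hiI : i ∈ I.erase k := mem_erase.mpr ⟨(hij.trans hjk).ne, hi⟩
  have him := mem_Icc.mp (hC.1 hi)
  have hkm := mem_Icc.mp (hC.1 hk)
  have hcard : ((I.erase i).erase k).card + 1 = (J.erase l).card := by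
    have := one_lt_card.mpr ⟨i, hi, k, hk, (hij.trans hjk).ne⟩
    rw [card_erase_of_mem hkI, card_erase_of_mem hi, card_erase_of_mem hl, ← hC.2.2]
    omega
  have hrel := hP ((I.erase i).erase k) (J.erase l) i j k l
    ((erase_subset _ _).trans ((erase_subset _ _).trans hC.1))
    ((erase_subset _ _).trans hC.2.1) (hC.1 hi) (mem_Icc.mpr ⟨by omega, by omega⟩) (hC.1 hk)
    (hC.2.1 hl) (fun h' => notMem_erase i I (mem_of_mem_erase h'))
    (fun h' => hj (mem_of_mem_erase (mem_of_mem_erase h'))) (notMem_erase k _)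
    (notMem_erase l J) hij hjk hcard
  rwa [insert_comm i j, erase_right_comm (s := I), insert_erase hiI, erase_right_comm (s := I),
    insert_erase hkI, insert_erase hi, insert_erase hl] at hrel

lemma DodgsonRel.Icc {q : R} (hD : DodgsonRel m n q h) {i b j d : ℕ} (hi : 1 ≤ i)
    (hb : b + 1 ≤ m) (hj : 1 ≤ j) (hd : d + 1 ≤ n) (hib : i ≤ b) (hjd : j ≤ d)
    (hlen : b - i = d - j) :
    h (Icc i b) (Icc j d) * h (Icc (i + 1) (b + 1)) (Icc (j + 1) (d + 1)) =
      h (Icc i (b + 1)) (Icc j (d + 1)) * h (Icc (i + 1) b) (Icc (j + 1) d) +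
      q * (h (Icc i b) (Icc (j + 1) (d + 1)) * h (Icc (i + 1) (b + 1)) (Icc j d)) := by
  have := hD i (b + 1) j (d + 1) hi hb hj hd (by omega) (by omega) (by omega)
  simp only [Nat.add_sub_cancel] at this
  rwa [insert_Icc_right_eq_Icc_add_one (by omega), insert_Icc_right_eq_Icc_add_one (by omega),
    insert_Icc_add_one_left_eq_Icc hib, insert_Icc_add_one_left_eq_Icc hjd,
    insert_Icc_add_one_left_eq_Icc (by omega), insert_Icc_add_one_left_eq_Icc (by omega)] at this

end Relations

lemma pressedInt_empty : PressedInt ∅ ∅ := ⟨⟨1, 0, rfl⟩, ⟨1, 0, rfl⟩, .inl rfl⟩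

lemma pressedInt_Icc_Icc {a b c d : ℕ} (h : a = 1 ∨ c = 1) :
    PressedInt (Icc a b) (Icc c d) := by
  refine ⟨⟨a, b, rfl⟩, ⟨c, d, rfl⟩, ?_⟩
  rcases h with rfl | rfl
  · exact .inl (by rw [Nat.card_Icc, Nat.add_sub_cancel])
  · exact .inr (by rw [Nat.card_Icc, Nat.add_sub_cancel])

section Uniqueness

variable {R : Type*} [Ring R] {m n : ℕ} {f g : Finset ℕ → Finset ℕ → R}

lemma eq_on_Icc_Icc_of_dodgsonRel {q : R} (hfD : DodgsonRel m n q f)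
    (hgD : DodgsonRel m n q g)
    (hreg : ∀ I J, Cortege m n I J → IsLeftRegular (f I J))
    (hpress : ∀ I J, Cortege m n I J → PressedInt I J → f I J = g I J) (a b c d : ℕ)
    (hC : Cortege m n (Icc a b) (Icc c d)) : f (Icc a b) (Icc c d) = g (Icc a b) (Icc c d) := by
  induction hs : b + c using Nat.strong_induction_on generalizing a b c d with
  | _ s ih =>
  rcases lt_or_ge b a with hba | hab
  · have hdc : d < c := by have := hC.2.2; simp only [Nat.card_Icc] at this; omega
    rw [Icc_eq_empty_of_lt hba, Icc_eq_empty_of_lt hdc] at hC ⊢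
    exact hpress ∅ ∅ hC pressedInt_empty
  obtain ⟨ha, hb, hc, hd, hlen⟩ := hC.Icc_bounds hab
  by_cases hpr : a = 1 ∨ c = 1
  · exact hpress _ _ hC (pressedInt_Icc_Icc hpr)
  obtain ⟨i, rfl⟩ : ∃ i, a = i + 1 := ⟨a - 1, by omega⟩
  obtain ⟨j, rfl⟩ : ∃ j, c = j + 1 := ⟨c - 1, by omega⟩
  obtain ⟨b, rfl⟩ : ∃ b', b = b' + 1 := ⟨b - 1, by omega⟩
  obtain ⟨d, rfl⟩ : ∃ d', d = d' + 1 := ⟨d - 1, by omega⟩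
  have ih' : ∀ a' b' c' d', b' + c' < s ∧ 1 ≤ a' ∧ b' ≤ m ∧ 1 ≤ c' ∧ d' ≤ n ∧
      b' + 1 - a' = d' + 1 - c' → f (Icc a' b') (Icc c' d') = g (Icc a' b') (Icc c' d') :=
    fun a' b' c' d' h => ih _ h.1 a' b' c' d' (cortege_Icc h.2.1 h.2.2.1 h.2.2.2.1 h.2.2.2.2.1
      h.2.2.2.2.2) rfl
  have hDf := hfD.Icc (i := i) (j := j) (by omega) hb (by omega) hd (by omega) (by omega)
    (by omega)
  have hDg := hgD.Icc (i := i) (j := j) (by omega) hb (by omega) hd (by omega) (by omega)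
    (by omega)
  rw [← ih' i b j d (by omega), ← ih' i (b + 1) j (d + 1) (by omega),
    ← ih' (i + 1) b (j + 1) d (by omega), ← ih' i b (j + 1) (d + 1) (by omega),
    ← ih' (i + 1) (b + 1) j d (by omega)] at hDg
  exact hreg _ _ (cortege_Icc (by omega) (by omega) (by omega) (by omega) (by omega))
    (hDf.trans hDg.symm)

lemma eq_of_gap_of_plueckerRel (hfP : PlueckerRel m n f) (hgP : PlueckerRel m n g)
    (hreg : ∀ I J, Cortege m n I J → IsLeftRegular (f I J)) {I J : Finset ℕ}
    (hC : Cortege m n I J) {i j k : ℕ} (hi : i ∈ I) (hk : k ∈ I) (hIik : I ⊆ Icc i k)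
    (hj : j ∉ I) (hij : i < j) (hjk : j < k)
    (ih : ∀ I' J', Cortege m n I' J' →
      J'.card + width I' + width J' < J.card + width I + width J → f I' J' = g I' J') :
    f I J = g I J := by
  obtain ⟨l, hl⟩ : J.Nonempty := card_pos.mp (hC.2.2 ▸ card_pos.mpr ⟨i, hi⟩)
  have hjm : j ∈ Icc 1 m := by
    have := mem_Icc.mp (hC.1 hi)
    have := mem_Icc.mp (hC.1 hk)
    exact mem_Icc.mpr ⟨by omega, by omega⟩
  have hjik : j ∈ Icc i k := mem_Icc.mpr ⟨hij.le, hjk.le⟩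
  have hwI : width I = k - i := width_eq_of_subset_Icc hi hk hIik
  have hwJ : width (J.erase l) ≤ width J := width_mono (erase_subset l J)
  have hcard : (J.erase l).card < J.card := card_erase_lt_of_mem hl
  have hwi : width (I.erase i) ≤ k - i := width_le_of_subset_Icc ((erase_subset _ _).trans hIik)
  have hwk : width (I.erase k) ≤ k - i := width_le_of_subset_Icc ((erase_subset _ _).trans hIik)
  have hwjik : width (insert j ((I.erase i).erase k)) ≤ k - i :=
    width_le_of_subset_Icc (insert_subset hjik
      ((erase_subset _ _).trans ((erase_subset _ _).trans hIik)))
  have hwjk : width (insert j (I.erase k)) ≤ k - 1 - i := by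
    refine width_le_of_subset_Icc
      (insert_subset (mem_Icc.mpr ⟨hij.le, by omega⟩) fun x hx => ?_)
    have := mem_Icc.mp (hIik (mem_of_mem_erase hx))
    have := ne_of_mem_erase hx
    exact mem_Icc.mpr ⟨by omega, by omega⟩
  have hwji : width (insert j (I.erase i)) ≤ k - (i + 1) := by
    refine width_le_of_subset_Icc
      (insert_subset (mem_Icc.mpr ⟨by omega, hjk.le⟩) fun x hx => ?_)
    have := mem_Icc.mp (hIik (mem_of_mem_erase hx))
    have := ne_of_mem_erase hx
    exact mem_Icc.mpr ⟨by omega, by omega⟩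
  have hki : k ∈ I.erase i := mem_erase.mpr ⟨(hij.trans hjk).ne', hk⟩
  have hCjik := (hC.erase hi hl).insert_erase hki (fun h => hj (mem_of_mem_erase h)) hjm
  have hPf := hfP.relation_at_gap hC hi hk hj hij hjk hl
  have hPg := hgP.relation_at_gap hC hi hk hj hij hjk hl
  rw [← ih _ _ hCjik (by omega), ← ih _ _ (hC.insert_erase hk hj hjm) (by omega),
    ← ih _ _ (hC.insert_erase hi hj hjm) (by omega), ← ih _ _ (hC.erase hi hl) (by omega),
    ← ih _ _ (hC.erase hk hl) (by omega)] at hPg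
  exact hreg _ _ hCjik (hPf.trans hPg.symm)

lemma eq_of_eq_on_Icc_Icc (hfP : PlueckerRel m n f) (hgP : PlueckerRel m n g)
    (hfC : CoPlueckerRel m n f) (hgC : CoPlueckerRel m n g)
    (hreg : ∀ I J, Cortege m n I J → IsLeftRegular (f I J))
    (hint : ∀ a b c d, Cortege m n (Icc a b) (Icc c d) →
      f (Icc a b) (Icc c d) = g (Icc a b) (Icc c d))
    (I J : Finset ℕ) (hC : Cortege m n I J) : f I J = g I J := by
  induction hs : J.card + width I + width J using Nat.strong_induction_on generalizing I J with
  | _ s ih =>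
  subst hs
  rcases exists_eq_Icc_or_exists_gap I with
    ⟨a, b, rfl⟩ | ⟨i, hi, k, hk, hIik, j, hj, hij, hjk⟩
  · rcases exists_eq_Icc_or_exists_gap J with
      ⟨c, d, rfl⟩ | ⟨i, hi, k, hk, hJik, j, hj, hij, hjk⟩
    · exact hint a b c d hC
    · refine eq_of_gap_of_plueckerRel (f := Function.swap f) (g := Function.swap g)
        hfC.plueckerRel_swap hgC.plueckerRel_swap (fun J I h => hreg I J h.swap) hC.swap
        hi hk hJik hj hij hjk fun J' I' hC' hlt => ih _ ?_ I' J' hC'.swap rfl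
      have := hC.2.2; have := hC'.2.2; omega
  · exact eq_of_gap_of_plueckerRel hfP hgP hreg hC hi hk hIik hj hij hjk
      fun I' J' hC' hlt => ih _ hlt I' J' hC' rfl

end Uniqueness

theorem stmt9_general {R : Type*} [Ring R] (m n : ℕ)
    (q : Rˣ)
    (f g : Finset ℕ → Finset ℕ → R)
    (hfreg : ∀ I J, Cortege m n I J →
      (∀ x : R, f I J * x = 0 → x = 0) ∧ (∀ x : R, x * f I J = 0 → x = 0))
    (hfP : PlueckerRel m n f) (hgP : PlueckerRel m n g)
    (hfC : CoPlueckerRel m n f) (hgC : CoPlueckerRel m n g)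
    (hfD : DodgsonRel m n (q : R) f) (hgD : DodgsonRel m n (q : R) g)
    (hpress : ∀ I J, Cortege m n I J → PressedInt I J → f I J = g I J) :
    ∀ I J, Cortege m n I J → f I J = g I J := by
  have hreg : ∀ I J, Cortege m n I J → IsLeftRegular (f I J) := fun I J hC =>
    isLeftRegular_iff_right_eq_zero_of_mul.mpr (hfreg I J hC).1
  exact eq_of_eq_on_Icc_Icc hfP hgP hfC hgC hreg
    (eq_on_Icc_Icc_of_dodgsonRel hfD hgD hreg hpress)

/-- Theorem A: two RQI-functions `f, g` with nonzero values,
with `f(∅|∅) = g(∅|∅) = 1`, such that no value of `f` is a zero divisor,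
both satisfying all Plücker-, co-Plücker- and Dodgson-type relations, and
coinciding on all pressed double-interval corteges, coincide on all of
`E^{m,n}`. -/
theorem stmt9 {R : Type*} [Ring R] (m n : ℕ) (hm : 1 ≤ m) (hn : 1 ≤ n)
    (q : Rˣ) (hq : ∀ x : R, (q : R) * x = x * (q : R))
    (f g : Finset ℕ → Finset ℕ → R)
    (hf1 : f ∅ ∅ = 1) (hg1 : g ∅ ∅ = 1)
    (hfnz : ∀ I J, Cortege m n I J → f I J ≠ 0)
    (hgnz : ∀ I J, Cortege m n I J → g I J ≠ 0)
    (hfreg : ∀ I J, Cortege m n I J →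
      (∀ x : R, f I J * x = 0 → x = 0) ∧ (∀ x : R, x * f I J = 0 → x = 0))
    (hfP : PlueckerRel m n f) (hgP : PlueckerRel m n g)
    (hfC : CoPlueckerRel m n f) (hgC : CoPlueckerRel m n g)
    (hfD : DodgsonRel m n (q : R) f) (hgD : DodgsonRel m n (q : R) g)
    (hpress : ∀ I J, Cortege m n I J → PressedInt I J → f I J = g I J) :
    ∀ I J, Cortege m n I J → f I J = g I J :=
  stmt9_general m n q f g hfreg hfP hgP hfC hgC hfD hgD hpress
end

section
/- Let f, g : E^{m,n} → A be functions into a ring A satisfying all Plücker-type relations, and let (I|J) ∈ E^{m,n} be such that I is not an interval, f(I'|J') = g(I'|J') for all corteges (I'|J') with σ(I',J') < σ(I,J), where σ(I,J) := max I − min I + max J − min J, and some value f(Aj|B) appearing in the relevant Plücker relation is nonzero and not a zero divisor. Then f(I|J) = g(I|J). -/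
open Finset

/-- The minimum of a finite set of naturals (0 on the empty set). -/
def minN (S : Finset ℕ) : ℕ := if h : S.Nonempty then S.min' h else 0

/-- The maximum of a finite set of naturals (0 on the empty set). -/
def maxN (S : Finset ℕ) : ℕ := if h : S.Nonempty then S.max' h else 0

/-- `σ(I,J) = max I − min I + max J − min J`. -/
def sigmaIJ (I J : Finset ℕ) : ℕ := (maxN I - minN I) + (maxN J - minN J)

lemma minN_le {S : Finset ℕ} {x : ℕ} (hx : x ∈ S) : minN S ≤ x := by
  rw [minN, dif_pos ⟨x, hx⟩]
  exact S.min'_le x hx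

lemma le_maxN {S : Finset ℕ} {x : ℕ} (hx : x ∈ S) : x ≤ maxN S := by
  rw [maxN, dif_pos ⟨x, hx⟩]
  exact S.le_max' x hx

lemma minN_mem {S : Finset ℕ} (hS : S.Nonempty) : minN S ∈ S := by
  rw [minN, dif_pos hS]
  exact S.min'_mem hS

lemma maxN_mem {S : Finset ℕ} (hS : S.Nonempty) : maxN S ∈ S := by
  rw [maxN, dif_pos hS]
  exact S.max'_mem hS

lemma minN_eq {S : Finset ℕ} {a : ℕ} (ha : a ∈ S) (h : ∀ x ∈ S, a ≤ x) : minN S = a :=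
  le_antisymm (minN_le ha) (h _ (minN_mem ⟨a, ha⟩))

lemma maxN_eq {S : Finset ℕ} {a : ℕ} (ha : a ∈ S) (h : ∀ x ∈ S, x ≤ a) : maxN S = a :=
  le_antisymm (h _ (maxN_mem ⟨a, ha⟩)) (le_maxN ha)

lemma nonempty_of_minN_lt_maxN {S : Finset ℕ} (h : minN S < maxN S) : S.Nonempty := by
  rw [Finset.nonempty_iff_ne_empty]
  rintro rfl
  simp [minN, maxN] at h

lemma insert_minN_insert_maxN {S : Finset ℕ} (h : minN S < maxN S) :
    insert (minN S) (insert (maxN S) ((S.erase (minN S)).erase (maxN S))) = S := by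
  have hS := nonempty_of_minN_lt_maxN h
  rw [insert_erase (mem_erase.2 ⟨h.ne', maxN_mem hS⟩), insert_erase (minN_mem hS)]

lemma card_erase_minN_erase_maxN {S : Finset ℕ} (h : minN S < maxN S) :
    ((S.erase (minN S)).erase (maxN S)).card + 2 = S.card := by
  have hS := nonempty_of_minN_lt_maxN h
  have := card_erase_add_one (mem_erase.2 ⟨h.ne', maxN_mem hS⟩)
  have := card_erase_add_one (minN_mem hS)
  omega

lemma erase_minN_erase_maxN_subset_Ioo (S : Finset ℕ) :
    (S.erase (minN S)).erase (maxN S) ⊆ Ioo (minN S) (maxN S) := fun x hx ↦ by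
  simp only [mem_erase] at hx
  obtain ⟨hxk, hxi, hxS⟩ := hx
  exact mem_Ioo.2 ⟨(minN_le hxS).lt_of_ne' hxi, (le_maxN hxS).lt_of_ne hxk⟩

lemma maxN_sub_minN_le_of_subset_Icc {S : Finset ℕ} {a b : ℕ} (h : S ⊆ Icc a b) :
    maxN S - minN S ≤ b - a := by
  rcases S.eq_empty_or_nonempty with rfl | hS
  · simp [minN, maxN]
  · have hmin := mem_Icc.1 (h (minN_mem hS))
    have hmax := mem_Icc.1 (h (maxN_mem hS))
    omega

lemma maxN_sub_minN_mono {S T : Finset ℕ} (h : S ⊆ T) :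
    maxN S - minN S ≤ maxN T - minN T :=
  maxN_sub_minN_le_of_subset_Icc fun _ hx ↦ mem_Icc.2 ⟨minN_le (h hx), le_maxN (h hx)⟩

lemma maxN_sub_minN_insert_insert {A : Finset ℕ} {i k : ℕ} (hik : i ≤ k) (hA : A ⊆ Icc i k) :
    maxN (insert i (insert k A)) - minN (insert i (insert k A)) = k - i := by
  have hbound : insert i (insert k A) ⊆ Icc i k :=
    insert_subset (mem_Icc.2 ⟨le_rfl, hik⟩) (insert_subset (mem_Icc.2 ⟨hik, le_rfl⟩) hA)
  rw [minN_eq (mem_insert_self _ _) fun x hx ↦ (mem_Icc.1 (hbound hx)).1,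
    maxN_eq (mem_insert_of_mem (mem_insert_self _ _)) fun x hx ↦ (mem_Icc.1 (hbound hx)).2]

lemma sigmaIJ_lt_of_subset {I J I' J' : Finset ℕ} {a b : ℕ} (hI' : I' ⊆ Icc a b)
    (hab : b - a < maxN I - minN I) (hJ' : J' ⊆ J) : sigmaIJ I' J' < sigmaIJ I J := by
  have := maxN_sub_minN_le_of_subset_Icc hI'
  have := maxN_sub_minN_mono hJ'
  unfold sigmaIJ
  omega

lemma Cortege.insert {m n : ℕ} {I J : Finset ℕ} {x l : ℕ} (h : Cortege m n I J)
    (hx : x ∈ Icc 1 m) (hxI : x ∉ I) (hl : l ∈ Icc 1 n) (hlJ : l ∉ J) :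
    Cortege m n (insert x I) (insert l J) :=
  ⟨insert_subset hx h.1, insert_subset hl h.2.1, by
    rw [card_insert_of_notMem hxI, card_insert_of_notMem hlJ, h.2.2]⟩

lemma cortege_insert_of_card_succ {m n : ℕ} {A B : Finset ℕ} {x : ℕ} (hA : A ⊆ Icc 1 m)
    (hB : B ⊆ Icc 1 n) (hx : x ∈ Icc 1 m) (hxA : x ∉ A) (hcard : A.card + 1 = B.card) :
    Cortege m n (insert x A) B :=
  ⟨insert_subset hx hA, hB, by rw [card_insert_of_notMem hxA, hcard]⟩

/-- Each of the five other corteges in the Plücker relation for `(Aik|Bℓ)` misses `i` or `k`,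
so its `σ` is smaller than `σ(Aik|Bℓ) = k - i + σ(Bℓ)`. -/
theorem PlueckerRel.eq_of_eq_of_sigmaIJ_lt {R : Type*} [Ring R] {m n : ℕ}
    {f g : Finset ℕ → Finset ℕ → R} (hfP : PlueckerRel m n f) (hgP : PlueckerRel m n g)
    {A B : Finset ℕ} {i j k l : ℕ} (hi : i ∈ Icc 1 m) (hk : k ∈ Icc 1 m) (hA : A ⊆ Ioo i k)
    (hij : i < j) (hjk : j < k) (hjA : j ∉ A) (hB : B ⊆ Icc 1 n) (hl : l ∈ Icc 1 n)
    (hlB : l ∉ B) (hcard : A.card + 1 = B.card)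
    (hcoinc : ∀ I' J', Cortege m n I' J' →
      sigmaIJ I' J' < sigmaIJ (insert i (insert k A)) (insert l B) → f I' J' = g I' J')
    (hreg : IsLeftRegular (f (insert j A) B)) :
    f (insert i (insert k A)) (insert l B) = g (insert i (insert k A)) (insert l B) := by
  have hIoo : Ioo i k ⊆ Icc 1 m :=
    Ioo_subset_Icc_self.trans (Icc_subset_Icc (mem_Icc.1 hi).1 (mem_Icc.1 hk).2)
  have hAm : A ⊆ Icc 1 m := hA.trans hIoo
  have hj : j ∈ Icc 1 m := hIoo (mem_Ioo.2 ⟨hij, hjk⟩)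
  have hiA : i ∉ A := fun h ↦ (mem_Ioo.1 (hA h)).1.false
  have hkA : k ∉ A := fun h ↦ (mem_Ioo.1 (hA h)).2.false
  have hA' : ∀ {a b}, a ≤ i + 1 → k - 1 ≤ b → A ⊆ Icc a b := fun ha hb x hx ↦ by
    have := mem_Ioo.1 (hA hx)
    exact mem_Icc.2 ⟨by omega, by omega⟩
  have hwidth := maxN_sub_minN_insert_insert (hij.trans hjk).le (hA' (by omega) (by omega))
  have agree : ∀ I' J' a b, Cortege m n I' J' → I' ⊆ Icc a b → b - a < k - i →
      J' ⊆ insert l B → f I' J' = g I' J' := fun I' J' a b hc hI' hab hJ' ↦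
    hcoinc I' J' hc (sigmaIJ_lt_of_subset hI' (hwidth ▸ hab) hJ')
  have hjkA : j ∉ insert k A := by simp [hjA, hjk.ne]
  have hijA : i ∉ insert j A := by simp [hiA, hij.ne]
  have e1 := agree (insert j A) B (i + 1) (k - 1)
    (cortege_insert_of_card_succ hAm hB hj hjA hcard)
    (insert_subset (mem_Icc.2 ⟨by omega, by omega⟩) (hA' le_rfl le_rfl)) (by omega)
    (subset_insert _ _)
  have e2 := agree (insert i (insert j A)) (insert l B) i (k - 1)
    ((cortege_insert_of_card_succ hAm hB hj hjA hcard).insert hi hijA hl hlB)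
    (insert_subset (mem_Icc.2 ⟨le_rfl, by omega⟩) <|
      insert_subset (mem_Icc.2 ⟨by omega, by omega⟩) (hA' (by omega) le_rfl)) (by omega)
    subset_rfl
  have e3 := agree (insert k A) B (i + 1) k
    (cortege_insert_of_card_succ hAm hB hk hkA hcard)
    (insert_subset (mem_Icc.2 ⟨by omega, le_rfl⟩) (hA' le_rfl (by omega))) (by omega)
    (subset_insert _ _)
  have e4 := agree (insert j (insert k A)) (insert l B) (i + 1) k
    ((cortege_insert_of_card_succ hAm hB hk hkA hcard).insert hj hjkA hl hlB)
    (insert_subset (mem_Icc.2 ⟨by omega, by omega⟩) <|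
      insert_subset (mem_Icc.2 ⟨by omega, le_rfl⟩) (hA' le_rfl (by omega))) (by omega)
    subset_rfl
  have e5 := agree (insert i A) B i (k - 1)
    (cortege_insert_of_card_succ hAm hB hi hiA hcard)
    (insert_subset (mem_Icc.2 ⟨le_rfl, by omega⟩) (hA' (by omega) le_rfl)) (by omega)
    (subset_insert _ _)
  apply hreg
  calc f (insert j A) B * f (insert i (insert k A)) (insert l B)
      = f (insert i (insert j A)) (insert l B) * f (insert k A) B +
          f (insert j (insert k A)) (insert l B) * f (insert i A) B :=
        hfP A B i j k l hAm hB hi hj hk hl hiA hjA hkA hlB hij hjk hcard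
    _ = g (insert j A) B * g (insert i (insert k A)) (insert l B) := by
        rw [e2, e3, e4, e5, hgP A B i j k l hAm hB hi hj hk hl hiA hjA hkA hlB hij hjk hcard]
    _ = f (insert j A) B * g (insert i (insert k A)) (insert l B) := by rw [e1]

theorem stmt10_general {R : Type*} [Ring R] (m n : ℕ)
    (f g : Finset ℕ → Finset ℕ → R)
    (hfP : PlueckerRel m n f) (hgP : PlueckerRel m n g)
    (I J : Finset ℕ) (hIJ : Cortege m n I J)
    (hcoinc : ∀ I' J', Cortege m n I' J' →
      sigmaIJ I' J' < sigmaIJ I J → f I' J' = g I' J')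
    (hreg : ∃ j, minN I < j ∧ j < maxN I ∧ j ∉ I ∧ ∃ l ∈ J,
      (f (insert j ((I.erase (minN I)).erase (maxN I))) (J.erase l) ≠ 0 ∧
       (∀ x : R, f (insert j ((I.erase (minN I)).erase (maxN I))) (J.erase l) * x = 0 → x = 0) ∧
       (∀ x : R, x * f (insert j ((I.erase (minN I)).erase (maxN I))) (J.erase l) = 0 → x = 0))) :
    f I J = g I J := by
  obtain ⟨j, hij, hjk, hjI, l, hlJ, -, hreg, -⟩ := hreg
  obtain ⟨hIm, hJn, hcard⟩ := hIJ
  have hik := hij.trans hjk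
  have hI := nonempty_of_minN_lt_maxN hik
  have hIeq := insert_minN_insert_maxN hik
  have hJeq : insert l (J.erase l) = J := insert_erase hlJ
  have hcardAB : ((I.erase (minN I)).erase (maxN I)).card + 1 = (J.erase l).card := by
    have := card_erase_minN_erase_maxN hik
    have := card_erase_add_one hlJ
    omega
  have key := hfP.eq_of_eq_of_sigmaIJ_lt hgP (hIm (minN_mem hI)) (hIm (maxN_mem hI))
    (erase_minN_erase_maxN_subset_Ioo I) hij hjk
    (fun h ↦ hjI (mem_of_mem_erase (mem_of_mem_erase h))) ((erase_subset l J).trans hJn)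
    (hJn hlJ) (notMem_erase l J) hcardAB (by rwa [hIeq, hJeq])
    (isLeftRegular_iff_right_eq_zero_of_mul.2 hreg)
  rwa [hIeq, hJeq] at key

/-- induction step, Case 1: if `f, g` satisfy all Plücker-type
relations, `(I|J)` is a cortege with `I` not an interval, `f` and `g` agree on
all corteges of smaller `σ`, and for some `j` with `min I < j < max I`,
`j ∉ I`, and some `ℓ ∈ J` the value `f(Aj|B)` (where `A = I \ {min I, max I}`,
`B = J \ {ℓ}`) is nonzero and not a zero divisor, then `f(I|J) = g(I|J)`. -/
theorem stmt10 {R : Type*} [Ring R] (m n : ℕ)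
    (f g : Finset ℕ → Finset ℕ → R)
    (hfP : PlueckerRel m n f) (hgP : PlueckerRel m n g)
    (I J : Finset ℕ) (hIJ : Cortege m n I J)
    (hInotint : ¬ ∃ a b, I = Finset.Icc a b)
    (hcoinc : ∀ I' J', Cortege m n I' J' →
      sigmaIJ I' J' < sigmaIJ I J → f I' J' = g I' J')
    (hreg : ∃ j, minN I < j ∧ j < maxN I ∧ j ∉ I ∧ ∃ l ∈ J,
      (f (insert j ((I.erase (minN I)).erase (maxN I))) (J.erase l) ≠ 0 ∧
       (∀ x : R, f (insert j ((I.erase (minN I)).erase (maxN I))) (J.erase l) * x = 0 → x = 0) ∧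
       (∀ x : R, x * f (insert j ((I.erase (minN I)).erase (maxN I))) (J.erase l) = 0 → x = 0))) :
    f I J = g I J :=
  stmt10_general m n f g hfP hgP I J hIJ hcoinc hreg
end

section
/- Let G be the extended m×n grid directed graph, and let (I|J) be a pressed interval cortege with i = max I, j = max J, k = min(i,j). Then there is exactly one (I|J)-flow in G (a family of pairwise vertex-disjoint directed paths from sources {r_p : p ∈ I} to sinks {c_q : q ∈ J}), and it consists of paths P_1,...,P_k where P_ℓ goes from r_{i−k+ℓ} east along row i−k+ℓ to column j−k+ℓ and then south to c_{j−k+ℓ}, making its single turn at vertex (i−k+ℓ, j−k+ℓ). -/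
/-- Directed edges of the extended `m×n` grid: horizontal edges
`(i,j-1) → (i,j)` and vertical edges `(i,j) → (i-1,j)` for `i ∈ [m]`,
`j ∈ [n]`. -/
def GridEdge (m n : ℕ) (u v : ℕ × ℕ) : Prop :=
  (u.1 = v.1 ∧ 1 ≤ u.1 ∧ u.1 ≤ m ∧ v.2 = u.2 + 1 ∧ 1 ≤ v.2 ∧ v.2 ≤ n) ∨
  (u.2 = v.2 ∧ u.1 = v.1 + 1 ∧ 1 ≤ u.1 ∧ u.1 ≤ m ∧ 1 ≤ u.2 ∧ u.2 ≤ n)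

/-- `φ` is an `(I|J)`-flow: for each `p ∈ I` the list `φ p` is a directed
path of the grid from the source `r_p = (p,0)` to some sink `c_q = (0,q)`
with `q ∈ J`, every sink of `J` is reached, and the paths are pairwise
vertex-disjoint. -/
def IsFlow (m n : ℕ) (I J : Finset ℕ) (φ : ℕ → List (ℕ × ℕ)) : Prop :=
  (∀ p ∈ I, (φ p).Chain' (GridEdge m n) ∧ (φ p).head? = some (p, 0) ∧
    ∃ q ∈ J, (φ p).getLast? = some (0, q)) ∧
  (∀ q ∈ J, ∃ p ∈ I, (φ p).getLast? = some (0, q)) ∧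
  (∀ p ∈ I, ∀ p' ∈ I, p ≠ p' → ∀ v, v ∈ φ p → v ∉ φ p')

/-- The hook path from the source `(p,0)`: east along row `p` to column `c`
(its single turn at `(p,c)`), then south to the sink `(0,c)`. -/
def hookPath (p c : ℕ) : List (ℕ × ℕ) :=
  ((List.range (c + 1)).map fun t => (p, t)) ++
    ((List.range p).reverse.map fun t => (t, c))

/-!
Grid paths only move east or south, so the path `φ p` from the source `(p, 0)` runs east along
row `p` up to some column `d` and then leaves the row. By induction on `p`, the hooks of the
smaller sources fill row `p - 1` up to column `p + j - i - 1`, forcing `d ≥ p + j - i`. The sink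
`p + j - i` is therefore reached by `φ p` itself: the smaller hooks end elsewhere, and a path from
a higher source would have to cross row `p` inside the stretch already used by `φ p`. Finally a
path from `(p - 1, d)` to `(0, p + j - i)` with `d ≥ p + j - i` can only go straight south.
-/

section GridPath

variable {m n : ℕ}

lemma GridEdge.monotone {u v : ℕ × ℕ} (h : GridEdge m n u v) : v.1 ≤ u.1 ∧ u.2 ≤ v.2 := by
  rcases h with ⟨h1, -, -, h2, -⟩ | ⟨h1, h2, -⟩ <;> omega

lemma GridEdge.one_le_fst {u v : ℕ × ℕ} (h : GridEdge m n u v) : 1 ≤ u.1 := by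
  rcases h with ⟨-, h, -⟩ | ⟨-, -, h, -⟩ <;> exact h

lemma gridPath_le_getLast {L : List (ℕ × ℕ)} {w : ℕ × ℕ} (hL : L.IsChain (GridEdge m n))
    (hlast : L.getLast? = some w) : ∀ v ∈ L, w.1 ≤ v.1 ∧ v.2 ≤ w.2 := by
  refine hL.backwards_induction _ _ (fun x y hxy hy => ?_) (fun hne => ?_)
  · have := hxy.monotone; omega
  · rw [List.getLast?_eq_some_getLast hne, Option.some.injEq] at hlast
    simp [hlast]

lemma gridPath_eq_singleton_of_head?_eq {L : List (ℕ × ℕ)} {d : ℕ}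
    (hL : L.IsChain (GridEdge m n)) (hhead : L.head? = some (0, d)) : L = [(0, d)] := by
  rcases L with _ | ⟨u, _ | ⟨v, T⟩⟩
  · simp at hhead
  · simpa using hhead
  · cases Option.some.inj hhead
    exact absurd (List.isChain_cons_cons.mp hL).1.one_le_fst (by simp)

lemma gridPath_exists_mem_row {L : List (ℕ × ℕ)} {a b x : ℕ} {w : ℕ × ℕ}
    (hL : L.IsChain (GridEdge m n)) (hhead : L.head? = some (a, b))
    (hlast : L.getLast? = some w) (hwx : w.1 ≤ x) (hxa : x ≤ a) : ∃ y, (x, y) ∈ L := by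
  induction L generalizing a b with
  | nil => simp at hhead
  | cons u L ih =>
    cases Option.some.inj hhead
    rcases hxa.eq_or_lt with rfl | hxa
    · exact ⟨b, List.mem_cons_self⟩
    cases L with
    | nil => rw [List.getLast?_singleton, Option.some.injEq] at hlast; subst hlast; omega
    | cons v T =>
      obtain ⟨a', b'⟩ := v
      rw [List.isChain_cons_cons] at hL
      rw [List.getLast?_cons_cons] at hlast
      have ha' : x ≤ a' := by
        rcases hL.1 with ⟨h, -⟩ | ⟨-, h, -⟩ <;> simp only at h <;> omega
      obtain ⟨y, hy⟩ := ih hL.2 rfl hlast ha'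
      exact ⟨y, List.mem_cons_of_mem _ hy⟩

lemma gridPath_eq_column {L : List (ℕ × ℕ)} {x c : ℕ} (hL : L.IsChain (GridEdge m n))
    (hhead : L.head? = some (x, c)) (hlast : L.getLast? = some (0, c)) :
    L = (List.range (x + 1)).reverse.map fun t => (t, c) := by
  induction L generalizing x with
  | nil => simp at hhead
  | cons u L ih =>
    cases Option.some.inj hhead
    cases L with
    | nil =>
      simp only [List.getLast?_singleton, Option.some.injEq, Prod.mk.injEq, and_true] at hlast
      simp [hlast]
    | cons v T =>
      obtain ⟨y, c'⟩ := v
      rw [List.isChain_cons_cons] at hL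
      rw [List.getLast?_cons_cons] at hlast
      have hc' := (gridPath_le_getLast hL.2 hlast _ List.mem_cons_self).2
      obtain ⟨rfl, rfl⟩ : c' = c ∧ x = y + 1 := by
        rcases hL.1 with ⟨-, -, -, h, -⟩ | ⟨h1, h2, -⟩
        · simp only at h hc'; omega
        · simp only at h1 h2; omega
      rw [ih hL.2 rfl hlast, List.range_succ (n := y + 1)]
      simp

lemma gridPath_eq_row_append {L : List (ℕ × ℕ)} {a b : ℕ} {w : ℕ × ℕ}
    (hL : L.IsChain (GridEdge m n)) (hhead : L.head? = some (a, b))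
    (hlast : L.getLast? = some w) (hwa : w.1 < a) :
    ∃ k L', L = ((List.range' b (k + 1)).map fun t => (a, t)) ++ L' ∧
      L'.IsChain (GridEdge m n) ∧ L'.head? = some (a - 1, b + k) ∧ 1 ≤ b + k := by
  induction L generalizing b with
  | nil => simp at hhead
  | cons u L ih =>
    cases Option.some.inj hhead
    cases L with
    | nil => rw [List.getLast?_singleton, Option.some.injEq] at hlast; subst hlast; omega
    | cons v T =>
      obtain ⟨x, y⟩ := v
      rw [List.isChain_cons_cons] at hL
      rw [List.getLast?_cons_cons] at hlast
      rcases hL.1 with ⟨h1, -, -, h2, -⟩ | ⟨h1, h2, -, -, h3, -⟩ <;> simp only at h1 h2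
      · subst h1 h2
        obtain ⟨k, L', hL'eq, hL', hhead', hk⟩ := ih hL.2 rfl hlast
        refine ⟨k + 1, L', ?_, hL', by rw [hhead', Nat.add_right_comm, Nat.add_assoc], by omega⟩
        rw [List.range'_succ, List.map_cons, List.cons_append, hL'eq]
      · subst h1 h2
        exact ⟨0, (x, b) :: T, by simp, hL.2, by simp, h3⟩

end GridPath

lemma mem_hookPath {v : ℕ × ℕ} {p c : ℕ} :
    v ∈ hookPath p c ↔ (v.1 = p ∧ v.2 ≤ c) ∨ (v.2 = c ∧ v.1 < p) := by
  obtain ⟨a, b⟩ := v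
  simp only [hookPath, List.mem_append, List.mem_map, List.mem_reverse, List.mem_range,
    Prod.mk.injEq]
  constructor
  · rintro (⟨t, ht, rfl, rfl⟩ | ⟨t, ht, rfl, rfl⟩) <;> omega
  · rintro (⟨rfl, hb⟩ | ⟨rfl, ha⟩)
    · exact Or.inl ⟨b, by omega, rfl, rfl⟩
    · exact Or.inr ⟨a, ha, rfl, rfl⟩

lemma hookPath_head? (p c : ℕ) : (hookPath p c).head? = some (p, 0) := by
  simp [hookPath, List.range_succ_eq_map]

lemma hookPath_getLast? (p c : ℕ) : (hookPath p c).getLast? = some (0, c) := by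
  cases p with
  | zero => simp [hookPath, List.getLast?_range]
  | succ p =>
    rw [hookPath, List.getLast?_append_of_ne_nil _ (by simp), List.map_reverse,
      List.getLast?_reverse, List.range_succ_eq_map]
    rfl

lemma hookPath_isChain {m n p c : ℕ} (hp : 1 ≤ p) (hpm : p ≤ m) (hc : 1 ≤ c) (hcn : c ≤ n) :
    (hookPath p c).IsChain (GridEdge m n) := by
  obtain ⟨p, rfl⟩ : ∃ q, p = q + 1 := ⟨p - 1, by omega⟩
  rw [hookPath, List.isChain_append, List.isChain_map, List.isChain_map, List.isChain_reverse,
    List.isChain_range_succ, List.isChain_range_succ]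
  refine ⟨fun t ht => Or.inl ⟨rfl, hp, hpm, rfl, by omega, by omega⟩,
    fun t ht => Or.inr ⟨rfl, rfl, by omega, by omega, hc, hcn⟩, ?_⟩
  simp only [List.getLast?_map, List.head?_map, List.head?_reverse, List.getLast?_range,
    Nat.add_one_ne_zero, if_false, Nat.add_sub_cancel, Option.map_some, Option.mem_def,
    Option.some.injEq]
  rintro _ rfl _ rfl
  exact Or.inr ⟨rfl, rfl, by omega, hpm, hc, hcn⟩

section Flow

open Finset

variable {m n r s i j : ℕ}

lemma isFlow_hookPath (hr1 : 1 ≤ r) (him : i ≤ m) (hs1 : 1 ≤ s) (hjn : j ≤ n)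
    (hcard : i + 1 - r = j + 1 - s) :
    IsFlow m n (Icc r i) (Icc s j) (fun p => hookPath p (p + j - i)) := by
  refine ⟨fun p hp => ?_, fun q hq => ?_, fun p hp p' hp' hne v hv hv' => ?_⟩
  · rw [mem_Icc] at hp
    exact ⟨hookPath_isChain (by omega) (by omega) (by omega) (by omega), hookPath_head? _ _,
      p + j - i, mem_Icc.mpr (by omega), hookPath_getLast? _ _⟩
  · rw [mem_Icc] at hq
    refine ⟨q + i - j, mem_Icc.mpr (by omega), ?_⟩
    simpa only [show q + i - j + j - i = q by omega] using hookPath_getLast? _ q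
  · rw [mem_Icc] at hp hp'
    rw [mem_hookPath] at hv hv'
    omega

variable {φ : ℕ → List (ℕ × ℕ)}

lemma IsFlow.column_le_of_eq_append (hφ : IsFlow m n (Icc r i) (Icc s j) φ)
    (hcard : i + 1 - r = j + 1 - s) (hpressed : r = 1 ∨ s = 1) {p : ℕ} (hp : p ∈ Icc r i)
    (ih : ∀ x ∈ Icc r i, x < p → φ x = hookPath x (x + j - i)) {d : ℕ} {L : List (ℕ × ℕ)}
    (hφp : φ p = ((List.range (d + 1)).map fun t => (p, t)) ++ L)
    (hL : L.IsChain (GridEdge m n)) (hhead : L.head? = some (p - 1, d)) (hd : 1 ≤ d) :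
    p + j - i ≤ d := by
  rw [mem_Icc] at hp
  by_contra! hlt
  have hdrop : (p - 1, d) ∈ φ p := by
    rw [hφp]; exact List.mem_append_right _ (List.mem_of_mem_head? hhead)
  rcases hp.1.eq_or_lt with rfl | hrp
  -- For the smallest source there is no hook below, and pressedness takes its place: if `r = 1`
  -- the path would end at a sink left of `s`, if `s = 1` it would leave row `r` in column `0`,
  -- which has no vertical edges.
  · obtain rfl | rfl := hpressed
    · obtain ⟨-, -, q, hq, hlast⟩ := hφ.1 1 (mem_Icc.mpr hp)
      rw [hφp, gridPath_eq_singleton_of_head?_eq hL hhead,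
        List.getLast?_append_of_ne_nil _ (List.cons_ne_nil _ _)] at hlast
      simp only [List.getLast?_singleton, Option.some.injEq, Prod.mk.injEq, true_and,
        mem_Icc] at hlast hq
      omega
    · omega
  · have hprev : p - 1 ∈ Icc r i := mem_Icc.mpr (by omega)
    refine hφ.2.2 _ hprev p (mem_Icc.mpr hp) (by omega) _ ?_ hdrop
    rw [ih _ hprev (by omega), mem_hookPath]
    omega

lemma IsFlow.getLast?_eq_of_mem_row (hφ : IsFlow m n (Icc r i) (Icc s j) φ)
    (hcard : i + 1 - r = j + 1 - s) {p : ℕ} (hp : p ∈ Icc r i)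
    (ih : ∀ x ∈ Icc r i, x < p → φ x = hookPath x (x + j - i))
    (hrow : ∀ t ≤ p + j - i, (p, t) ∈ φ p) :
    (φ p).getLast? = some (0, p + j - i) := by
  have hpI := mem_Icc.mp hp
  obtain ⟨p', hp', hlast⟩ := hφ.2.1 (p + j - i) (mem_Icc.mpr (by omega))
  rcases lt_trichotomy p' p with hlt | rfl | hgt
  · rw [ih p' hp' hlt, hookPath_getLast?] at hlast
    simp only [Option.some.injEq, Prod.mk.injEq, true_and, mem_Icc] at hlast hp'
    omega
  · exact hlast
  · obtain ⟨hchain, hhead, -⟩ := hφ.1 p' hp'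
    obtain ⟨y, hy⟩ := gridPath_exists_mem_row hchain hhead hlast (Nat.zero_le p) hgt.le
    have hyc := (gridPath_le_getLast hchain hlast _ hy).2
    exact absurd hy (hφ.2.2 p hp p' hp' hgt.ne (p, y) (hrow y hyc))

lemma IsFlow.eq_hookPath_of_forall_lt (hφ : IsFlow m n (Icc r i) (Icc s j) φ)
    (hcard : i + 1 - r = j + 1 - s) (hr1 : 1 ≤ r) (hpressed : r = 1 ∨ s = 1) {p : ℕ}
    (hp : p ∈ Icc r i) (ih : ∀ x ∈ Icc r i, x < p → φ x = hookPath x (x + j - i)) :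
    φ p = hookPath p (p + j - i) := by
  have hp1 : 1 ≤ p := hr1.trans (mem_Icc.mp hp).1
  obtain ⟨hchain, hhead, q, -, hlast⟩ := hφ.1 p hp
  obtain ⟨d, L, hφp, hL, hLhead, hd⟩ := gridPath_eq_row_append hchain hhead hlast hp1
  rw [← List.range_eq_range'] at hφp
  rw [zero_add] at hLhead hd
  have hcd := hφ.column_le_of_eq_append hcard hpressed hp ih hφp hL hLhead hd
  have hsink := hφ.getLast?_eq_of_mem_row hcard hp ih fun t ht => by
    rw [hφp]
    exact List.mem_append_left _ (List.mem_map.mpr ⟨t, List.mem_range.mpr (by omega), rfl⟩)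
  have hLlast : L.getLast? = some (0, p + j - i) := by
    rwa [hφp, List.getLast?_append_of_ne_nil _ (by rintro rfl; simp at hLhead)] at hsink
  have hdc := (gridPath_le_getLast hL hLlast _ (List.mem_of_mem_head? hLhead)).2
  obtain rfl : d = p + j - i := le_antisymm hdc hcd
  rw [hφp, gridPath_eq_column hL hLhead hLlast, Nat.sub_add_cancel hp1, hookPath]

theorem IsFlow.eq_hookPath (hφ : IsFlow m n (Icc r i) (Icc s j) φ)
    (hcard : i + 1 - r = j + 1 - s) (hr1 : 1 ≤ r) (hpressed : r = 1 ∨ s = 1) :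
    ∀ p ∈ Icc r i, φ p = hookPath p (p + j - i) := by
  intro p
  induction p using Nat.strong_induction_on with
  | _ p ih =>
    exact fun hp => hφ.eq_hookPath_of_forall_lt hcard hr1 hpressed hp fun x hx hxp => ih x hxp hx

end Flow

theorem stmt11_general (m n r s i j : ℕ)
    (hr1 : 1 ≤ r) (him : i ≤ m)
    (hs1 : 1 ≤ s) (hjn : j ≤ n)
    (hcard : (Finset.Icc r i).card = (Finset.Icc s j).card)
    (hpressed : r = 1 ∨ s = 1) :
    IsFlow m n (Finset.Icc r i) (Finset.Icc s j)
        (fun p => hookPath p (p + j - i)) ∧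
      ∀ φ, IsFlow m n (Finset.Icc r i) (Finset.Icc s j) φ →
        ∀ p ∈ Finset.Icc r i, φ p = hookPath p (p + j - i) := by
  rw [Nat.card_Icc, Nat.card_Icc] at hcard
  exact ⟨isFlow_hookPath hr1 him hs1 hjn hcard,
    fun φ hφ => hφ.eq_hookPath hcard hr1 hpressed⟩

/-- for a pressed interval cortege `(I|J)` with `I = [r..i]`,
`J = [s..j]`, `|I| = |J|`, `r = 1` or `s = 1`, there is exactly one
`(I|J)`-flow in the extended `m×n` grid, namely the one where the path
starting at source `p ∈ I` goes east to column `p + j − i` and then south,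
i.e. (writing `k = min(i,j)`, `p = i−k+ℓ`) the path `P_ℓ` makes its single
turn at the diagonal vertex `(i−k+ℓ, j−k+ℓ)`. -/
theorem stmt11 (m n r s i j : ℕ)
    (hr1 : 1 ≤ r) (hri : r ≤ i) (him : i ≤ m)
    (hs1 : 1 ≤ s) (hsj : s ≤ j) (hjn : j ≤ n)
    (hcard : (Finset.Icc r i).card = (Finset.Icc s j).card)
    (hpressed : r = 1 ∨ s = 1) :
    IsFlow m n (Finset.Icc r i) (Finset.Icc s j)
        (fun p => hookPath p (p + j - i)) ∧
      ∀ φ, IsFlow m n (Finset.Icc r i) (Finset.Icc s j) φ →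
        ∀ p ∈ Finset.Icc r i, φ p = hookPath p (p + j - i) :=
  stmt11_general m n r s i j hr1 him hs1 hjn hcard hpressed
end

section
/- The map π : [m]×[n] → Pint_{m,n} sending (i,j) to the cortege ([i−k+1..i] | [j−k+1..j]) with k = min(i,j) is a bijection between [m]×[n] and the set Pint_{m,n} of nonempty pressed double-interval corteges. -/
/-- The map `π` sending `(i,j)` to the cortege
`([i−k+1..i] | [j−k+1..j])` with `k = min(i,j)`. -/
def piMap (p : ℕ × ℕ) : Finset ℕ × Finset ℕ :=
  (Finset.Icc (p.1 - min p.1 p.2 + 1) p.1, Finset.Icc (p.2 - min p.1 p.2 + 1) p.2)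

/-- The set of nonempty pressed double-interval corteges of `E^{m,n}`:
pairs `(I,J)` of nonempty integer intervals `I ⊆ [1..m]`, `J ⊆ [1..n]` of
equal cardinality such that `I` or `J` is an initial interval. -/
def Pint (m n : ℕ) : Set (Finset ℕ × Finset ℕ) :=
  {IJ | (∃ a b, 1 ≤ a ∧ a ≤ b ∧ b ≤ m ∧ IJ.1 = Finset.Icc a b) ∧
        (∃ c d, 1 ≤ c ∧ c ≤ d ∧ d ≤ n ∧ IJ.2 = Finset.Icc c d) ∧
        IJ.1.card = IJ.2.card ∧
        (IJ.1 = Finset.Icc 1 IJ.1.card ∨ IJ.2 = Finset.Icc 1 IJ.2.card)}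

/-! The inverse of `π` reads off the right endpoints `(max I, max J)`: if one of the intervals is
initial, its right endpoint is the common length `k`, which is then the smaller of the two right
endpoints, so `π` rebuilds both intervals from them. -/

theorem Finset.Icc_eq_Icc_iff {α : Type*} [PartialOrder α] [LocallyFiniteOrder α]
    {a b c d : α} (h : a ≤ b) : Finset.Icc a b = Finset.Icc c d ↔ a = c ∧ b = d := by
  rw [← Finset.coe_inj, Finset.coe_Icc, Finset.coe_Icc, Set.Icc_eq_Icc_iff h]

open Finset

lemma piMap_mem_Pint {m n i j : ℕ} (hi : i ∈ Icc 1 m) (hj : j ∈ Icc 1 n) :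
    piMap (i, j) ∈ Pint m n := by
  rw [mem_Icc] at hi hj
  refine ⟨⟨_, _, by omega, by omega, hi.2, rfl⟩, ⟨_, _, by omega, by omega, hj.2, rfl⟩, ?_, ?_⟩
  · simp only [piMap, Nat.card_Icc]
    omega
  · simp only [piMap, Nat.card_Icc]
    rcases le_total i j with h | h
    · left
      congr 1 <;> omega
    · right
      congr 1 <;> omega

lemma piMap_injOn : Set.InjOn piMap {p | 1 ≤ p.1 ∧ 1 ≤ p.2} := by
  rintro ⟨i, j⟩ ⟨hi, hj⟩ ⟨i', j'⟩ - h
  simp only [piMap, Prod.mk.injEq] at h ⊢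
  exact ⟨((Icc_eq_Icc_iff (by omega)).1 h.1).2, ((Icc_eq_Icc_iff (by omega)).1 h.2).2⟩

lemma piMap_eq_Icc_Icc {a b c d : ℕ} (ha : 1 ≤ a) (hab : a ≤ b) (hc : 1 ≤ c) (hcd : c ≤ d)
    (hcard : b - a = d - c) (hinitial : a = 1 ∨ c = 1) :
    piMap (b, d) = (Icc a b, Icc c d) := by
  simp only [piMap, Prod.mk.injEq]
  constructor <;> congr 1 <;> omega

/-- `π` is a bijection between `[m]×[n]` and `Pint_{m,n}`. -/
theorem stmt15 (m n : ℕ) :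
    Set.BijOn piMap (↑(Finset.Icc 1 m ×ˢ Finset.Icc 1 n)) (Pint m n) := by
  refine ⟨fun p hp ↦ ?_, piMap_injOn.mono fun p hp ↦ ?_, ?_⟩
  · rw [coe_product, Set.mem_prod] at hp
    exact piMap_mem_Pint hp.1 hp.2
  · simp only [coe_product, Set.mem_prod, mem_coe, mem_Icc] at hp
    exact ⟨hp.1.1, hp.2.1⟩
  · rintro ⟨-, -⟩ ⟨⟨a, b, ha, hab, hbm, rfl⟩, ⟨c, d, hc, hcd, hdn, rfl⟩, hcard, hinitial⟩
    simp only [Nat.card_Icc] at hcard hinitial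
    have hinitial : a = 1 ∨ c = 1 := hinitial.imp
      (fun h ↦ ((Icc_eq_Icc_iff hab).1 h).1) (fun h ↦ ((Icc_eq_Icc_iff hcd).1 h).1)
    refine ⟨(b, d), ?_, piMap_eq_Icc_Icc ha hab hc hcd (by omega) hinitial⟩
    simp only [coe_product, Set.mem_prod, mem_coe, mem_Icc]
    omega
end

section
/- Let u = (i,j) and v = (i,j') be two inner vertices of the extended grid in the same row with j < j', and suppose the inner-vertex generators satisfy the relations: same row uv = q vu; same column (u above v) vu = q uv; otherwise commuting. Then for the weights w(i,j) and w(i,j') defined as ratios w(i,j) = B^{-1}A, w(i,j') = D^{-1}C of invertible elements A, B, C, D satisfying AC = q^{c1}CA, AD = q^{c2}DA, BC = q^{c3}CB, BD = q^{c4}DB with c1 − c2 − c3 + c4 = 1, one has w(i,j)·w(i,j') = q · w(i,j')·w(i,j). -/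
/-!
Because `q` is central, the exponent `n` in a relation `x y = qⁿ y x` behaves like a bilinear
pairing of `x` and `y`: it changes sign under swapping or inverting an argument and adds up
under products in either argument. Hence the exponent of `B⁻¹A` against `D⁻¹C` is
`c₄ - c₃ - c₂ + c₁ = 1`.
-/

def QCommute {G : Type*} [Group G] (q : G) (n : ℤ) (x y : G) : Prop :=
  x * y = q ^ n * (y * x)

namespace QCommute

variable {G : Type*} [Group G] {q : G} {a b n : ℤ} {x y z : G}

theorem symm (h : QCommute q n x y) : QCommute q (-n) y x := by
  rw [QCommute, h, ← mul_assoc, ← zpow_add, neg_add_cancel, zpow_zero, one_mul]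

theorem mul_right (hq : ∀ g, Commute q g) (hy : QCommute q a x y) (hz : QCommute q b x z) :
    QCommute q (a + b) x (y * z) :=
  calc x * (y * z) = q ^ a * (y * (x * z)) := by rw [← mul_assoc, hy, mul_assoc, mul_assoc]
    _ = q ^ a * (y * (q ^ b * (z * x))) := by rw [hz]
    _ = q ^ (a + b) * (y * z * x) := by
      rw [← mul_assoc y, ← ((hq y).zpow_left b).eq, zpow_add]; simp only [mul_assoc]

theorem mul_left (hq : ∀ g, Commute q g) (hx : QCommute q a x z) (hy : QCommute q b y z) :
    QCommute q (a + b) (x * y) z := by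
  have h := (hx.symm.mul_right hq hy.symm).symm
  rwa [neg_add, neg_neg, neg_neg] at h

theorem inv_left (hq : ∀ g, Commute q g) (h : QCommute q n x y) : QCommute q (-n) x⁻¹ y :=
  calc x⁻¹ * y = x⁻¹ * (y * x) * x⁻¹ := by group
    _ = x⁻¹ * (q ^ (-n) * (x * y)) * x⁻¹ := by rw [h.symm]
    _ = q ^ (-n) * (y * x⁻¹) := by
      rw [← mul_assoc, ← ((hq x⁻¹).zpow_left (-n)).eq]; group

theorem inv_right (hq : ∀ g, Commute q g) (h : QCommute q n x y) : QCommute q (-n) x y⁻¹ := by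
  simpa using (h.symm.inv_left hq).symm

end QCommute

theorem stmt17_general {M : Type*} [Monoid M] (q A B C D : Mˣ)
    (hq : ∀ x : M, (q : M) * x = x * (q : M))
    (i j j' : ℕ)
    (c1 c2 c3 c4 : ℤ)
    (h1 : A * C = q ^ c1 * (C * A))
    (h2 : A * D = q ^ c2 * (D * A))
    (h3 : B * C = q ^ c3 * (C * B))
    (h4 : B * D = q ^ c4 * (D * B))
    (hc : c1 - c2 - c3 + c4 = 1)
    (w : ℕ × ℕ → Mˣ)
    (hw : w (i, j) = B⁻¹ * A) (hw' : w (i, j') = D⁻¹ * C) :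
    w (i, j) * w (i, j') = q * (w (i, j') * w (i, j)) := by
  have hq' : ∀ u : Mˣ, Commute q u := fun u => Units.ext (hq u)
  have hB : QCommute q (- -c4 + -c3) B⁻¹ (D⁻¹ * C) :=
    ((QCommute.inv_right hq' h4).inv_left hq').mul_right hq' (QCommute.inv_left hq' h3)
  have hA : QCommute q (-c2 + c1) A (D⁻¹ * C) := (QCommute.inv_right hq' h2).mul_right hq' h1
  rw [hw, hw']
  simpa only [QCommute, show - -c4 + -c3 + (-c2 + c1) = 1 by omega, zpow_one] using
    hB.mul_left hq' hA

/-- for weights `w(i,j) = B⁻¹A` and `w(i,j') = D⁻¹C` of two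
inner vertices in the same row (`j < j'`), built from invertible elements
`A, B, C, D` satisfying `AC = q^{c₁}CA`, `AD = q^{c₂}DA`, `BC = q^{c₃}CB`,
`BD = q^{c₄}DB` with `c₁ − c₂ − c₃ + c₄ = 1`, one has
`w(i,j)·w(i,j') = q·w(i,j')·w(i,j)`. -/
theorem stmt17 {M : Type*} [Monoid M] (q A B C D : Mˣ)
    (hq : ∀ x : M, (q : M) * x = x * (q : M))
    (i j j' : ℕ) (hjj' : j < j')
    (c1 c2 c3 c4 : ℤ)
    (h1 : A * C = q ^ c1 * (C * A))
    (h2 : A * D = q ^ c2 * (D * A))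
    (h3 : B * C = q ^ c3 * (C * B))
    (h4 : B * D = q ^ c4 * (D * B))
    (hc : c1 - c2 - c3 + c4 = 1)
    (w : ℕ × ℕ → Mˣ)
    (hw : w (i, j) = B⁻¹ * A) (hw' : w (i, j') = D⁻¹ * C) :
    w (i, j) * w (i, j') = q * (w (i, j') * w (i, j)) :=
  stmt17_general q A B C D hq i j j' c1 c2 c3 c4 h1 h2 h3 h4 hc w hw hw'
end
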